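/- arXiv:2603.18574 — 4 statements merged into one kernel-verified Lean document; each statement's English description precedes it below -/
import Mathlib

section
/- For every integer n ≥ 1, the componentwise reduction map O → ∏_{i∈ℕ} O_i/π_i^n × O_∞/π_∞^n is a ring homomorphism whose kernel is π^n·O and whose image is exactly the subring consisting of those elements x = (x_1, x_2, …, x_∞) for which there exists an integer B ≥ n such that x_i equals the reduction mod π_i^n of ψ_i(x_∞) for all i ≥ B. In particular, O/π^n O is isomorphic to this subring of ∏_{i∈ℕ} O_i/π_i^n × O_∞/π_∞^n. -/
open PowerSeries

set_option maxHeartbeats 1000000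
set_option synthInstance.maxHeartbeats 400000

noncomputable section

variable (k : Type) [Field k]
variable (O : ℕ → Type) [∀ i, CommRing (O i)]
variable (π : ∀ i, O i) (e : ℕ → ℕ)
variable (ψ : ∀ i, ((PowerSeries k) ⧸ (Ideal.span {(X : PowerSeries k) ^ e i})) ≃+*
    ((O i) ⧸ (Ideal.span {π i ^ e i})))
variable (hψ : ∀ i, ψ i (Ideal.Quotient.mk _ (X : PowerSeries k)) = Ideal.Quotient.mk _ (π i))

/-- The product ring `∏_{i ∈ ℕ} O_i × O_∞`, where `O_∞ = k[[π_∞]]`. -/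
abbrev ProdRing : Type := ((i : ℕ) → O i) × PowerSeries k

/-- The defining condition for membership in the subring `O`:
for every `n ≥ 1` there is `B ≥ n` such that for all `i ≥ B` the `i`-th coordinate is
congruent to (a lift of) `ψ_i` of the `∞`-coordinate modulo `π_i^n`. -/
def closeMem (x : ProdRing k O) : Prop :=
  ∀ n : ℕ, 1 ≤ n → ∃ B, n ≤ B ∧ ∀ i, B ≤ i → ∃ y : O i,
    Ideal.Quotient.mk (Ideal.span {π i ^ e i}) y
      = ψ i (Ideal.Quotient.mk (Ideal.span {(X : PowerSeries k) ^ e i}) x.2)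
    ∧ x.1 i - y ∈ Ideal.span {π i ^ n}

/-- The ring `O` of a family of close fields, as a subring of `∏_{i ∈ ℕ} O_i × O_∞`. -/
def closeSubring : Subring (ProdRing k O) where
  carrier := {x | closeMem k O π e ψ x}
  zero_mem' := by
    intro n hn
    refine ⟨n, le_rfl, fun i hi => ⟨0, by simp, by simp⟩⟩
  one_mem' := by
    intro n hn
    refine ⟨n, le_rfl, fun i hi => ⟨1, by simp, by simp⟩⟩
  add_mem' := by
    intro a b ha hb n hn
    obtain ⟨B1, hB1, h1⟩ := ha n hn
    obtain ⟨B2, hB2, h2⟩ := hb n hn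
    refine ⟨max B1 B2, hB1.trans (le_max_left _ _), fun i hi => ?_⟩
    obtain ⟨y1, hy1, hy1'⟩ := h1 i ((le_max_left _ _).trans hi)
    obtain ⟨y2, hy2, hy2'⟩ := h2 i ((le_max_right _ _).trans hi)
    refine ⟨y1 + y2, ?_, ?_⟩
    · have : (a + b).2 = a.2 + b.2 := rfl
      rw [this, map_add, map_add, map_add, hy1, hy2]
    · have : (a + b).1 i - (y1 + y2) = (a.1 i - y1) + (b.1 i - y2) := by
        show a.1 i + b.1 i - (y1 + y2) = _
        ring
      rw [this]
      exact Ideal.add_mem _ hy1' hy2'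
  neg_mem' := by
    intro a ha n hn
    obtain ⟨B, hB, h⟩ := ha n hn
    refine ⟨B, hB, fun i hi => ?_⟩
    obtain ⟨y, hy, hy'⟩ := h i hi
    refine ⟨-y, ?_, ?_⟩
    · have : (-a).2 = -a.2 := rfl
      rw [this, map_neg, map_neg, map_neg, hy]
    · have : (-a).1 i - (-y) = -(a.1 i - y) := by
        show -a.1 i - (-y) = _
        ring
      rw [this]
      exact neg_mem hy'
  mul_mem' := by
    intro a b ha hb n hn
    obtain ⟨B1, hB1, h1⟩ := ha n hn
    obtain ⟨B2, hB2, h2⟩ := hb n hn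
    refine ⟨max B1 B2, hB1.trans (le_max_left _ _), fun i hi => ?_⟩
    obtain ⟨y1, hy1, hy1'⟩ := h1 i ((le_max_left _ _).trans hi)
    obtain ⟨y2, hy2, hy2'⟩ := h2 i ((le_max_right _ _).trans hi)
    refine ⟨y1 * y2, ?_, ?_⟩
    · have : (a * b).2 = a.2 * b.2 := rfl
      rw [this, map_mul, map_mul, map_mul, hy1, hy2]
    · have : (a * b).1 i - (y1 * y2) = (a.1 i - y1) * b.1 i + y1 * (b.1 i - y2) := by
        show a.1 i * b.1 i - (y1 * y2) = _
        ring
      rw [this]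
      exact Ideal.add_mem _ (Ideal.mul_mem_right _ _ hy1') (Ideal.mul_mem_left _ _ hy2')

/-- The element `π = (π_1, π_2, …, π_∞)` of `O`. -/
def piO : closeSubring k O π e ψ :=
  ⟨(π, (X : PowerSeries k)), by
    intro n hn
    exact ⟨n, le_rfl, fun i hi => ⟨π i, (hψ i).symm, by simp⟩⟩⟩

/-- The ring `F = O[1/π]`. -/
abbrev Fring : Type := Localization.Away (piO k O π e ψ hψ)

/-- Coordinate projection `O → O_j` for `j ∈ ℕ`. -/
def projO (j : ℕ) : closeSubring k O π e ψ →+* O j :=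
  (Pi.evalRingHom O j).comp ((RingHom.fst _ _).comp (closeSubring k O π e ψ).subtype)

/-- Coordinate projection `O → O_∞`. -/
def projInf : closeSubring k O π e ψ →+* PowerSeries k :=
  (RingHom.snd _ _).comp (closeSubring k O π e ψ).subtype

/-- The product ring `∏_{i ≥ B} O_i × O_∞`. -/
abbrev ProdRingGe (B : ℕ) : Type := ((i : {i : ℕ // B ≤ i}) → O i.1) × PowerSeries k

/-- The projection `∏_{i ∈ ℕ} O_i × O_∞ → ∏_{i ≥ B} O_i × O_∞`. -/
def projGe (B : ℕ) : ProdRing k O →+* ProdRingGe k O B :=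
  RingHom.prodMap (Pi.ringHom fun i => Pi.evalRingHom O i.1) (RingHom.id _)

/-- The composite `O → ∏_{i ≥ B} O_i × O_∞`. -/
def toGe (B : ℕ) : closeSubring k O π e ψ →+* ProdRingGe k O B :=
  (projGe k O B).comp (closeSubring k O π e ψ).subtype

/-- `O_{≥ B}`, the image of `O` under the coordinate projection. -/
def OgeB (B : ℕ) : Subring (ProdRingGe k O B) := (toGe k O π e ψ B).range

/-- The projection `O → O_{≥ B}`. -/
def toOgeB (B : ℕ) : closeSubring k O π e ψ →+* OgeB k O π e ψ B :=
  (toGe k O π e ψ B).rangeRestrict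

/-- The image of `π` in `O_{≥ B}`. -/
def piGe (B : ℕ) : OgeB k O π e ψ B := toOgeB k O π e ψ B (piO k O π e ψ hψ)

/-- The ring `F_{≥ B} = O_{≥ B}[1/π]`. -/
abbrev FgeB (B : ℕ) : Type := Localization.Away (piGe k O π e ψ hψ B)

/-- The projection `F → F_{≥ B}`. -/
def projFge (B : ℕ) : Fring k O π e ψ hψ →+* FgeB k O π e ψ hψ B :=
  Localization.awayLift
    ((algebraMap (OgeB k O π e ψ B) (FgeB k O π e ψ hψ B)).comp (toOgeB k O π e ψ B))
    (piO k O π e ψ hψ)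
    (IsLocalization.map_units (M := Submonoid.powers (piGe k O π e ψ hψ B)) _
      ⟨piGe k O π e ψ hψ B, Submonoid.mem_powers _⟩)

/-- The target ring `∏_{i ∈ ℕ} O_i/π_i^n × O_∞/π_∞^n`. -/
abbrev QuotRing (n : ℕ) : Type :=
  ((i : ℕ) → O i ⧸ Ideal.span {π i ^ n}) × ((PowerSeries k) ⧸ Ideal.span {(X : PowerSeries k) ^ n})

/-- The componentwise reduction map on the ambient product ring. -/
def reduceHom (n : ℕ) : ProdRing k O →+* QuotRing k O π n :=
  RingHom.prodMap
    (Pi.ringHom fun i => (Ideal.Quotient.mk (Ideal.span {π i ^ n})).comp (Pi.evalRingHom O i))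
    (Ideal.Quotient.mk (Ideal.span {(X : PowerSeries k) ^ n}))

/-- The componentwise reduction map `O → ∏_{i ∈ ℕ} O_i/π_i^n × O_∞/π_∞^n`. -/
def reduceO (n : ℕ) : closeSubring k O π e ψ →+* QuotRing k O π n :=
  (reduceHom k O π n).comp (closeSubring k O π e ψ).subtype


/-!
Because `ψ_i` sends `π_∞` to `π_i` and `n ≤ i ≤ e_i`, lifts of `ψ_i(z)` and `ψ_i(z')` to `O_i` are
congruent modulo `π_i^n` as soon as `z ≡ z'` modulo `π_∞^n`. Hence reducing modulo `π^n` keeps exactly the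
eventual compatibility at level `n`, and every such family lifts to an element of `O` whose large
coordinates are exact lifts of `ψ_i(z_∞)`. An element of the kernel is componentwise `π^n` times
something, and that quotient still lies in `O`: comparing with the compatibility of `x` at level `n + m`
and cancelling `π_i^n` in the domain `O_i` gives its compatibility at level `m`.
-/

section LiftsModPow

variable {A R F : Type*} [CommRing A] [CommRing R] {a : A} {b : R} {e : ℕ}
  [FunLike F (A ⧸ Ideal.span {a ^ e}) (R ⧸ Ideal.span {b ^ e})]
  [RingHomClass F (A ⧸ Ideal.span {a ^ e}) (R ⧸ Ideal.span {b ^ e})] (f : F)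

lemma Ideal.Quotient.mk_pow_mul_of_lift (hf : f (Ideal.Quotient.mk _ a) = Ideal.Quotient.mk _ b)
    {y : R} {z : A} (hy : Ideal.Quotient.mk _ y = f (Ideal.Quotient.mk _ z)) (n : ℕ) :
    Ideal.Quotient.mk _ (b ^ n * y) = f (Ideal.Quotient.mk _ (a ^ n * z)) := by
  simp only [map_mul, map_pow, hf, hy]

lemma sub_mem_span_pow_of_lifts (hf : f (Ideal.Quotient.mk _ a) = Ideal.Quotient.mk _ b)
    {n : ℕ} (hne : n ≤ e) {y y' : R} {z z' : A}
    (hy : Ideal.Quotient.mk _ y = f (Ideal.Quotient.mk _ z))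
    (hy' : Ideal.Quotient.mk _ y' = f (Ideal.Quotient.mk _ z'))
    (hz : z - z' ∈ Ideal.span {a ^ n}) : y - y' ∈ Ideal.span {b ^ n} := by
  obtain ⟨u, hu⟩ := Ideal.mem_span_singleton.mp hz
  obtain ⟨u', hu'⟩ := Ideal.Quotient.mk_surjective (f (Ideal.Quotient.mk _ u))
  have hlift : Ideal.Quotient.mk (Ideal.span {b ^ e}) (y - y') = Ideal.Quotient.mk _ (b ^ n * u') := by
    rw [Ideal.Quotient.mk_pow_mul_of_lift f hf hu', ← hu, map_sub, map_sub, map_sub, hy, hy']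
  have hdvd : b ^ n ∣ b ^ e := pow_dvd_pow b hne
  have hdiff := Ideal.span_singleton_le_span_singleton.mpr hdvd (Ideal.Quotient.eq.mp hlift)
  simpa using Ideal.add_mem _ hdiff (Ideal.mul_mem_right u' _ (Ideal.mem_span_singleton_self _))

end LiftsModPow

lemma Ideal.mem_span_pow_of_pow_mul_mem {R : Type*} [CommRing R] [IsDomain R] {b c : R}
    (hb : b ≠ 0) {n m : ℕ} (h : b ^ n * c ∈ Ideal.span {b ^ (n + m)}) :
    c ∈ Ideal.span {b ^ m} := by
  rw [Ideal.mem_span_singleton, pow_add] at *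
  exact (mul_dvd_mul_iff_left (pow_ne_zero n hb)).mp h

@[simp]
lemma coe_piO : (piO k O π e ψ hψ : ProdRing k O) = (π, X) := rfl

lemma mem_closeSubring_of_forall_ge {x : ProdRing k O} (B : ℕ)
    (h : ∀ i, B ≤ i → Ideal.Quotient.mk _ (x.1 i) = ψ i (Ideal.Quotient.mk _ x.2)) :
    x ∈ closeSubring k O π e ψ :=
  fun m _ => ⟨max m B, le_max_left _ _,
    fun i hi => ⟨x.1 i, h i (le_of_max_le_right hi), by simp⟩⟩

lemma mem_closeSubring_of_pow_mul_mem [∀ i, IsDomain (O i)] (hπ : ∀ i, π i ≠ 0)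
    (he : ∀ i, i ≤ e i) {n : ℕ} {w : ProdRing k O}
    (hw : (piO k O π e ψ hψ : ProdRing k O) ^ n * w ∈ closeSubring k O π e ψ) :
    w ∈ closeSubring k O π e ψ := by
  intro m hm
  obtain ⟨B, hB, hcompat⟩ := hw (n + m) (by omega)
  refine ⟨B, by omega, fun i hi => ?_⟩
  obtain ⟨y, hy, hxy⟩ := hcompat i hi
  simp only [coe_piO, Prod.fst_mul, Prod.snd_mul, Prod.pow_fst, Prod.pow_snd, Pi.mul_apply,
    Pi.pow_apply] at hy hxy
  obtain ⟨y', hy'⟩ := Ideal.Quotient.mk_surjective (ψ i (Ideal.Quotient.mk _ w.2))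
  refine ⟨y', hy', Ideal.mem_span_pow_of_pow_mul_mem (hπ i) (n := n) ?_⟩
  have hlift := Ideal.Quotient.mk_pow_mul_of_lift (ψ i) (hψ i) hy' n
  have hy_sub : y - π i ^ n * y' ∈ Ideal.span {π i ^ (n + m)} :=
    sub_mem_span_pow_of_lifts (ψ i) (hψ i) (by have := he i; omega) hy hlift (by simp)
  simpa [mul_sub] using Ideal.add_mem _ hxy hy_sub

@[simp]
lemma reduceHom_apply (n : ℕ) (x : ProdRing k O) :
    reduceHom k O π n x =
      (fun i => Ideal.Quotient.mk _ (x.1 i), Ideal.Quotient.mk _ x.2) := rfl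

lemma reduceO_apply (n : ℕ) (x : closeSubring k O π e ψ) :
    reduceO k O π e ψ n x = reduceHom k O π n x := rfl

lemma reduceHom_eq_zero_iff {n : ℕ} {x : ProdRing k O} :
    reduceHom k O π n x = 0 ↔ ∃ w : ProdRing k O, x = (π, X) ^ n * w := by
  rw [reduceHom_apply, Prod.ext_iff, funext_iff]
  simp only [Prod.fst_zero, Prod.snd_zero, Pi.zero_apply, Ideal.Quotient.eq_zero_iff_mem,
    Ideal.mem_span_singleton]
  constructor
  · rintro ⟨hfst, w₂, hw₂⟩
    choose w hw using hfst
    exact ⟨(w, w₂), Prod.ext (funext fun i => by simp [hw]) (by simp [hw₂])⟩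
  · rintro ⟨w, rfl⟩
    exact ⟨fun i => ⟨w.1 i, by simp⟩, ⟨w.2, by simp⟩⟩

lemma ker_reduceO [∀ i, IsDomain (O i)] (hπ : ∀ i, π i ≠ 0) (he : ∀ i, i ≤ e i) (n : ℕ) :
    RingHom.ker (reduceO k O π e ψ n) = Ideal.span {piO k O π e ψ hψ ^ n} := by
  ext x
  rw [RingHom.mem_ker, reduceO_apply, reduceHom_eq_zero_iff,
    Ideal.mem_span_singleton']
  constructor
  · rintro ⟨w, hxw⟩
    have hwO := mem_closeSubring_of_pow_mul_mem k O π e ψ hψ hπ he (n := n) (w := w)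
      (by rw [coe_piO, ← hxw]; exact x.2)
    exact ⟨⟨w, hwO⟩, Subtype.ext (by simp [hxw, mul_comm])⟩
  · rintro ⟨v, rfl⟩
    exact ⟨v, by simp [mul_comm]⟩

lemma mem_range_reduceO_iff (hψ : ∀ i, ψ i (Ideal.Quotient.mk _ X) = Ideal.Quotient.mk _ (π i))
    (he : ∀ i, i ≤ e i) {n : ℕ} (hn : 1 ≤ n) (x : QuotRing k O π n) :
    x ∈ (reduceO k O π e ψ n).range ↔
      ∃ B, n ≤ B ∧ ∀ i, B ≤ i →
        ∃ (z : PowerSeries k) (y : O i),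
          Ideal.Quotient.mk (Ideal.span {(X : PowerSeries k) ^ n}) z = x.2
          ∧ Ideal.Quotient.mk (Ideal.span {π i ^ e i}) y
              = ψ i (Ideal.Quotient.mk (Ideal.span {(X : PowerSeries k) ^ e i}) z)
          ∧ Ideal.Quotient.mk (Ideal.span {π i ^ n}) y = x.1 i := by
  constructor
  · rintro ⟨a, rfl⟩
    obtain ⟨B, hB, hcompat⟩ := a.2 n hn
    refine ⟨B, hB, fun i hi => ?_⟩
    obtain ⟨y, hy, hay⟩ := hcompat i hi
    exact ⟨a.1.2, y, rfl, hy, Ideal.Quotient.eq.mpr (by simpa using neg_mem hay)⟩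
  · rintro ⟨B, hB, hcompat⟩
    choose z y hz hy hyx using hcompat
    obtain ⟨x₁, x₂⟩ := x
    obtain ⟨z₀, rfl⟩ := Ideal.Quotient.mk_surjective x₂
    choose y₀ hy₀ using fun i => Ideal.Quotient.mk_surjective (x₁ i)
    choose t ht using fun i => Ideal.Quotient.mk_surjective (ψ i (Ideal.Quotient.mk _ z₀))
    let v : ProdRing k O := (fun i => if B ≤ i then t i else y₀ i, z₀)
    have hv : v ∈ closeSubring k O π e ψ :=
      mem_closeSubring_of_forall_ge k O π e ψ B fun i hi => by simp [v, hi, ht]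
    refine ⟨⟨v, hv⟩, Prod.ext (funext fun i => ?_) rfl⟩
    by_cases hi : B ≤ i
    · rw [← hyx i hi, reduceO_apply, reduceHom_apply]
      refine Ideal.Quotient.eq.mpr ?_
      simpa [v, hi] using sub_mem_span_pow_of_lifts (ψ i) (hψ i) (hB.trans (hi.trans (he i)))
        (ht i) (hy i hi) (Ideal.Quotient.eq.mp (hz i hi).symm)
    · simpa [reduceO_apply, v, hi] using hy₀ i

theorem statement_0_general
    (k : Type) [Field k]
    (O : ℕ → Type) [∀ i, CommRing (O i)] [∀ i, IsDomain (O i)]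
    (π : ∀ i, O i) (hπ : ∀ i, Irreducible (π i))
    (e : ℕ → ℕ) (he : ∀ i, i ≤ e i)
    (ψ : ∀ i, ((PowerSeries k) ⧸ (Ideal.span {(X : PowerSeries k) ^ e i})) ≃+*
      ((O i) ⧸ (Ideal.span {π i ^ e i})))
    (hψ : ∀ i, ψ i (Ideal.Quotient.mk _ (X : PowerSeries k)) = Ideal.Quotient.mk _ (π i))
    (n : ℕ) (hn : 1 ≤ n) :
    RingHom.ker (reduceO k O π e ψ n) = Ideal.span {piO k O π e ψ hψ ^ n}
    ∧ (∀ x : QuotRing k O π n, x ∈ (reduceO k O π e ψ n).range ↔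
        ∃ B, n ≤ B ∧ ∀ i, B ≤ i →
          ∃ (z : PowerSeries k) (y : O i),
            Ideal.Quotient.mk (Ideal.span {(X : PowerSeries k) ^ n}) z = x.2
            ∧ Ideal.Quotient.mk (Ideal.span {π i ^ e i}) y
                = ψ i (Ideal.Quotient.mk (Ideal.span {(X : PowerSeries k) ^ e i}) z)
            ∧ Ideal.Quotient.mk (Ideal.span {π i ^ n}) y = x.1 i)
    ∧ Nonempty ((↥(closeSubring k O π e ψ) ⧸ Ideal.span {piO k O π e ψ hψ ^ n})
        ≃+* (reduceO k O π e ψ n).range) := by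
  have hker := ker_reduceO k O π e ψ hψ (fun i => (hπ i).ne_zero) he n
  exact ⟨hker, mem_range_reduceO_iff k O π e ψ hψ he hn,
    ⟨(Ideal.quotEquivOfEq hker.symm).trans (RingHom.quotientKerEquivRange _)⟩⟩

theorem statement_0
    (p : ℕ) (hp : p.Prime)
    (k : Type) [Field k] [CharP k p] [ExpChar k p] [PerfectRing k p]
    (O : ℕ → Type) [∀ i, CommRing (O i)] [∀ i, IsDomain (O i)]
    [∀ i, IsDiscreteValuationRing (O i)] [∀ i, CharZero (O i)]
    (π : ∀ i, O i) (hπ : ∀ i, Irreducible (π i))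
    [∀ i, IsAdicComplete (Ideal.span {π i}) (O i)]
    (ρ : ∀ i, ((O i) ⧸ (Ideal.span {π i})) ≃+* k)
    (e : ℕ → ℕ) (he : ∀ i, i ≤ e i)
    (hpe : ∀ i, Ideal.span {((p : O i))} = Ideal.span {π i ^ e i})
    (ψ : ∀ i, ((PowerSeries k) ⧸ (Ideal.span {(X : PowerSeries k) ^ e i})) ≃+*
      ((O i) ⧸ (Ideal.span {π i ^ e i})))
    (hψ : ∀ i, ψ i (Ideal.Quotient.mk _ (X : PowerSeries k)) = Ideal.Quotient.mk _ (π i))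
    (n : ℕ) (hn : 1 ≤ n) :
    RingHom.ker (reduceO k O π e ψ n) = Ideal.span {piO k O π e ψ hψ ^ n}
    ∧ (∀ x : QuotRing k O π n, x ∈ (reduceO k O π e ψ n).range ↔
        ∃ B, n ≤ B ∧ ∀ i, B ≤ i →
          ∃ (z : PowerSeries k) (y : O i),
            Ideal.Quotient.mk (Ideal.span {(X : PowerSeries k) ^ n}) z = x.2
            ∧ Ideal.Quotient.mk (Ideal.span {π i ^ e i}) y
                = ψ i (Ideal.Quotient.mk (Ideal.span {(X : PowerSeries k) ^ e i}) z)
            ∧ Ideal.Quotient.mk (Ideal.span {π i ^ n}) y = x.1 i)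
    ∧ Nonempty ((↥(closeSubring k O π e ψ) ⧸ Ideal.span {piO k O π e ψ hψ ^ n})
        ≃+* (reduceO k O π e ψ n).range) :=
  statement_0_general k O π hπ e he ψ hψ n hn
end
end

section
/- The element π is a nonzerodivisor in the ring O, and O is π-adically complete and separated: the natural ring homomorphism O → lim_n O/π^n O into the inverse limit of its quotients modulo powers of π is bijective. -/
open PowerSeries

set_option maxHeartbeats 1000000
set_option synthInstance.maxHeartbeats 400000

noncomputable section

variable (k : Type) [Field k]
variable (O : ℕ → Type) [∀ i, CommRing (O i)]
variable (π : ∀ i, O i) (e : ℕ → ℕ)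
variable (ψ : ∀ i, ((PowerSeries k) ⧸ (Ideal.span {(X : PowerSeries k) ^ e i})) ≃+*
    ((O i) ⧸ (Ideal.span {π i ^ e i})))
variable (hψ : ∀ i, ψ i (Ideal.Quotient.mk _ (X : PowerSeries k)) = Ideal.Quotient.mk _ (π i))

/-!
`O` sits inside `P = ∏ O_i × k[[X]]`, which is `π`-adically complete because every factor is.
`O` is `π`-saturated in `P` (if `π^n y ∈ O` then `y ∈ O`: the defining congruences of
`π^n y` modulo `π_i^(n+m)` can be divided by `π_i^n` once `n + m ≤ e_i`) and `π`-adically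
closed (the congruence modulo `π_i^n` only depends on `x` modulo `π^n`). A saturated closed
subring of a `π`-adically complete ring is `π`-adically complete, and `π`, being regular in
every factor, is a nonzerodivisor of `O`.
-/

open Ideal

theorem Ideal.mem_span_singleton_pow_smul_top {R : Type*} [CommRing R] {r x : R} {n : ℕ} :
    x ∈ span {r} ^ n • (⊤ : Submodule R R) ↔ r ^ n ∣ x := by
  rw [smul_eq_mul, mul_top, span_singleton_pow, mem_span_singleton]

theorem isAdicComplete_span_singleton_iff {R : Type*} [CommRing R] (r : R) :
    IsAdicComplete (span {r}) R ↔
      (∀ x : R, (∀ n, r ^ n ∣ x) → x = 0) ∧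
      ∀ f : ℕ → R, (∀ {m n}, m ≤ n → r ^ m ∣ f m - f n) → ∃ L, ∀ n, r ^ n ∣ f n - L := by
  simp only [isAdicComplete_iff, isHausdorff_iff, isPrecomplete_iff, SModEq.sub_mem, sub_zero,
    mem_span_singleton_pow_smul_top]

theorem Pi.isAdicComplete_span_singleton {ι : Type*} {R : ι → Type*} [∀ i, CommRing (R i)]
    (r : ∀ i, R i) [∀ i, IsAdicComplete (span {r i}) (R i)] :
    IsAdicComplete (span {r}) (∀ i, R i) := by
  have hR i := (isAdicComplete_span_singleton_iff (r i)).1 inferInstance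
  refine (isAdicComplete_span_singleton_iff r).2 ⟨fun x hx => ?_, fun f hf => ?_⟩
  · exact funext fun i => (hR i).1 (x i) fun n => pi_dvd_iff.1 (hx n) i
  · choose L hL using fun i => (hR i).2 (f · i) fun hmn => pi_dvd_iff.1 (hf hmn) i
    exact ⟨L, fun n => pi_dvd_iff.2 fun i => hL i n⟩

theorem Prod.isAdicComplete_span_singleton {R S : Type*} [CommRing R] [CommRing S] (r : R) (s : S)
    [IsAdicComplete (span {r}) R] [IsAdicComplete (span {s}) S] :
    IsAdicComplete (span {(r, s)}) (R × S) := by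
  obtain ⟨hausR, precR⟩ := (isAdicComplete_span_singleton_iff r).1 inferInstance
  obtain ⟨hausS, precS⟩ := (isAdicComplete_span_singleton_iff s).1 inferInstance
  refine (isAdicComplete_span_singleton_iff _).2 ⟨fun x hx => ?_, fun f hf => ?_⟩
  · exact Prod.ext (hausR _ fun n => (prod_dvd_iff.1 (hx n)).1)
      (hausS _ fun n => (prod_dvd_iff.1 (hx n)).2)
  · obtain ⟨L, hL⟩ := precR (fun n => (f n).1) fun hmn => (prod_dvd_iff.1 (hf hmn)).1
    obtain ⟨M, hM⟩ := precS (fun n => (f n).2) fun hmn => (prod_dvd_iff.1 (hf hmn)).2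
    exact ⟨(L, M), fun n => prod_dvd_iff.2 ⟨hL n, hM n⟩⟩

namespace Subring

variable {P : Type*} [CommRing P] {S : Subring P} (s : S)

theorem pow_dvd_iff_coe_of_saturated (hsat : ∀ n (y : P), (s : P) ^ n * y ∈ S → y ∈ S)
    {n : ℕ} {x : S} : s ^ n ∣ x ↔ (s : P) ^ n ∣ x := by
  refine ⟨fun h => by simpa using map_dvd S.subtype h, fun ⟨y, hy⟩ => ?_⟩
  exact ⟨⟨y, hsat n y (hy ▸ x.2)⟩, Subtype.ext hy⟩

theorem isAdicComplete_span_singleton [IsAdicComplete (span {(s : P)}) P]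
    (hsat : ∀ n (y : P), (s : P) ^ n * y ∈ S → y ∈ S)
    (hclosed : ∀ L : P, (∀ n, ∃ x ∈ S, (s : P) ^ n ∣ L - x) → L ∈ S) :
    IsAdicComplete (span {s}) S := by
  obtain ⟨haus, prec⟩ := (isAdicComplete_span_singleton_iff (s : P)).1 inferInstance
  simp only [isAdicComplete_span_singleton_iff, pow_dvd_iff_coe_of_saturated s hsat]
  refine ⟨fun x hx => Subtype.ext (haus x hx), fun f hf => ?_⟩
  obtain ⟨L, hL⟩ := prec (fun n => f n) fun hmn => by simpa using hf hmn
  have hLS : L ∈ S := hclosed L fun n => ⟨f n, (f n).2, by simpa using (hL n).neg_right⟩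
  exact ⟨⟨L, hLS⟩, fun n => by simpa using hL n⟩

end Subring

variable {k O π e}

/-- `closeMem x` unfolds to `CloseAt ψ i n (x.1 i) x.2` for all large `i`. -/
def CloseAt (i n : ℕ) (a : O i) (b : PowerSeries k) : Prop :=
  ∃ y : O i, Ideal.Quotient.mk (span {π i ^ e i}) y
      = ψ i (Ideal.Quotient.mk (span {(X : PowerSeries k) ^ e i}) b)
    ∧ a - y ∈ span {π i ^ n}

include hψ in
theorem CloseAt.add_pow_mul {i n : ℕ} {a s : O i} {b t : PowerSeries k}
    (h : CloseAt ψ i n a b) : CloseAt ψ i n (a + π i ^ n * s) (b + X ^ n * t) := by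
  obtain ⟨y, hy, hay⟩ := h
  obtain ⟨w, hw⟩ := Ideal.Quotient.mk_surjective (ψ i (Ideal.Quotient.mk _ t))
  refine ⟨y + π i ^ n * w, ?_, ?_⟩
  · simp only [map_add, map_mul, map_pow, hy, hw, ← hψ i]
  · rw [show a + π i ^ n * s - (y + π i ^ n * w) = (a - y) + π i ^ n * (s - w) by ring]
    exact add_mem hay (mem_span_singleton.2 (dvd_mul_right _ _))

include hψ in
theorem CloseAt.of_pow_mul {i : ℕ} [IsDomain (O i)] (hπ : π i ≠ 0) {n m : ℕ} (hnm : n + m ≤ e i)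
    {a : O i} {b : PowerSeries k}
    (h : CloseAt ψ i (n + m) (π i ^ n * a) (X ^ n * b)) : CloseAt ψ i m a b := by
  obtain ⟨z, hz, haz⟩ := h
  obtain ⟨w, hw⟩ := Ideal.Quotient.mk_surjective (ψ i (Ideal.Quotient.mk _ b))
  refine ⟨w, hw, ?_⟩
  have hzw : π i ^ (n + m) ∣ z - π i ^ n * w := by
    refine (pow_dvd_pow _ hnm).trans (mem_span_singleton.1 (Ideal.Quotient.eq.1 ?_))
    simp only [map_mul, map_pow, hz, hw, ← hψ i]
  rw [mem_span_singleton] at haz ⊢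
  rw [← mul_dvd_mul_iff_left (pow_ne_zero n hπ), ← pow_add,
    show π i ^ n * (a - w) = (π i ^ n * a - z) + (z - π i ^ n * w) by ring]
  exact dvd_add haz hzw

include hψ in
theorem mem_closeSubring_of_pow_mul [∀ i, IsDomain (O i)] (hπ : ∀ i, π i ≠ 0)
    (he : ∀ i, i ≤ e i) (n : ℕ) (y : ProdRing k O)
    (h : ((π, X) : ProdRing k O) ^ n * y ∈ closeSubring k O π e ψ) :
    y ∈ closeSubring k O π e ψ := by
  intro m hm
  obtain ⟨B, hnB, hB⟩ := h (n + m) (by omega)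
  exact ⟨B, by omega, fun i hi =>
    CloseAt.of_pow_mul ψ hψ (hπ i) ((hnB.trans hi).trans (he i)) (hB i hi)⟩

include hψ in
theorem mem_closeSubring_of_forall_pow_dvd_sub (L : ProdRing k O)
    (h : ∀ n, ∃ x ∈ closeSubring k O π e ψ, ((π, X) : ProdRing k O) ^ n ∣ L - x) :
    L ∈ closeSubring k O π e ψ := by
  intro n hn
  obtain ⟨x, hx, c, hc⟩ := h n
  obtain ⟨B, hnB, hB⟩ := hx n hn
  have hL : L = x + ((π, X) : ProdRing k O) ^ n * c := by rw [← hc, add_sub_cancel]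
  refine ⟨B, hnB, fun i hi => ?_⟩
  rw [hL]
  exact CloseAt.add_pow_mul ψ hψ (hB i hi)

theorem statement_1_general
    (k : Type) [Field k]
    (O : ℕ → Type) [∀ i, CommRing (O i)] [∀ i, IsDomain (O i)]
    (π : ∀ i, O i) (hπ : ∀ i, Irreducible (π i))
    [∀ i, IsAdicComplete (Ideal.span {π i}) (O i)]
    (e : ℕ → ℕ) (he : ∀ i, i ≤ e i)
    (ψ : ∀ i, ((PowerSeries k) ⧸ (Ideal.span {(X : PowerSeries k) ^ e i})) ≃+*
      ((O i) ⧸ (Ideal.span {π i ^ e i})))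
    (hψ : ∀ i, ψ i (Ideal.Quotient.mk _ (X : PowerSeries k)) = Ideal.Quotient.mk _ (π i)) :
    (piO k O π e ψ hψ) ∈ nonZeroDivisors ↥(closeSubring k O π e ψ)
    ∧ IsAdicComplete (Ideal.span {piO k O π e ψ hψ}) ↥(closeSubring k O π e ψ) := by
  have hπ₀ i : π i ≠ 0 := (hπ i).ne_zero
  have hreg : IsRegular ((π, X) : ProdRing k O) :=
    (Pi.isRegular_iff.2 fun i => .of_ne_zero (hπ₀ i)).prodMk (.of_ne_zero X_ne_zero)
  have := Pi.isAdicComplete_span_singleton π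
  have : IsAdicComplete (span {(piO k O π e ψ hψ : ProdRing k O)}) (ProdRing k O) :=
    Prod.isAdicComplete_span_singleton π X
  refine ⟨mem_nonZeroDivisors_of_injective (f := (closeSubring k O π e ψ).subtype)
    Subtype.val_injective hreg.mem_nonZeroDivisors, ?_⟩
  exact Subring.isAdicComplete_span_singleton _
    (mem_closeSubring_of_pow_mul ψ hψ hπ₀ he) (mem_closeSubring_of_forall_pow_dvd_sub ψ hψ)

theorem statement_1
    (p : ℕ) (hp : p.Prime)
    (k : Type) [Field k] [CharP k p] [ExpChar k p] [PerfectRing k p]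
    (O : ℕ → Type) [∀ i, CommRing (O i)] [∀ i, IsDomain (O i)]
    [∀ i, IsDiscreteValuationRing (O i)] [∀ i, CharZero (O i)]
    (π : ∀ i, O i) (hπ : ∀ i, Irreducible (π i))
    [∀ i, IsAdicComplete (Ideal.span {π i}) (O i)]
    (ρ : ∀ i, ((O i) ⧸ (Ideal.span {π i})) ≃+* k)
    (e : ℕ → ℕ) (he : ∀ i, i ≤ e i)
    (hpe : ∀ i, Ideal.span {((p : O i))} = Ideal.span {π i ^ e i})
    (ψ : ∀ i, ((PowerSeries k) ⧸ (Ideal.span {(X : PowerSeries k) ^ e i})) ≃+*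
      ((O i) ⧸ (Ideal.span {π i ^ e i})))
    (hψ : ∀ i, ψ i (Ideal.Quotient.mk _ (X : PowerSeries k)) = Ideal.Quotient.mk _ (π i)) :
    (piO k O π e ψ hψ) ∈ nonZeroDivisors ↥(closeSubring k O π e ψ)
    ∧ IsAdicComplete (Ideal.span {piO k O π e ψ hψ}) ↥(closeSubring k O π e ψ) :=
  statement_1_general k O π hπ e he ψ hψ
end
end

section
/- For every B ≥ 1, the ring homomorphism O → ∏_{1≤i≤B-1} O_i × O_{≥B}, whose components are the coordinate projections O → O_i for 1 ≤ i ≤ B−1 together with the projection O → O_{≥B}, is an isomorphism of rings; consequently, after inverting π, the induced map F → ∏_{1≤i≤B-1} F_i × F_{≥B} is also an isomorphism of rings. -/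
open PowerSeries

set_option maxHeartbeats 1000000
set_option synthInstance.maxHeartbeats 400000

noncomputable section

variable (k : Type) [Field k]
variable (O : ℕ → Type) [∀ i, CommRing (O i)]
variable (π : ∀ i, O i) (e : ℕ → ℕ)
variable (ψ : ∀ i, ((PowerSeries k) ⧸ (Ideal.span {(X : PowerSeries k) ^ e i})) ≃+*
    ((O i) ⧸ (Ideal.span {π i ^ e i})))
variable (hψ : ∀ i, ψ i (Ideal.Quotient.mk _ (X : PowerSeries k)) = Ideal.Quotient.mk _ (π i))

/-- The product `∏_{i < B} O_i`. -/
abbrev ProdLt (B : ℕ) : Type := (i : {i : ℕ // i < B}) → O i.1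

/-- The ring homomorphism `O → ∏_{i < B} O_i × O_{≥ B}` given by the coordinate
projections together with the projection onto `O_{≥ B}`. -/
def splitHom (B : ℕ) : closeSubring k O π e ψ →+* (ProdLt O B) × (OgeB k O π e ψ B) :=
  RingHom.prod (Pi.ringHom fun i => projO k O π e ψ i.1) (toOgeB k O π e ψ B)

/-- The ring homomorphism `O → ∏_{i < B} F_i × F_{≥ B}`. -/
def splitHomF (B : ℕ) :
    closeSubring k O π e ψ →+* ((i : {i : ℕ // i < B}) → FractionRing (O i.1)) ×
      FgeB k O π e ψ hψ B :=
  RingHom.prod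
    (Pi.ringHom fun i =>
      (algebraMap (O i.1) (FractionRing (O i.1))).comp (projO k O π e ψ i.1))
    ((algebraMap (OgeB k O π e ψ B) (FgeB k O π e ψ hψ B)).comp (toOgeB k O π e ψ B))


/-! Membership in `O` only constrains the `∞`-coordinate and the coordinates `i ≥ C` for some
`C`, so the coordinates below `B` can be changed freely, and `O` splits as
`∏_{i < B} O_i × O_{≥ B}`. Inverting `π` commutes with finite products, and inverting a
uniformizer of a discrete valuation ring already gives its fraction field; transporting the
localization along the splitting gives `F ≅ ∏_{i < B} F_i × F_{≥ B}`. -/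

namespace IsLocalization

theorem away_fractionRing_of_irreducible {R : Type*} [CommRing R] [IsDomain R]
    [IsDiscreteValuationRing R] {ϖ : R} (hϖ : Irreducible ϖ) :
    IsLocalization.Away ϖ (FractionRing R) := by
  refine (iff_of_le_of_exists_dvd _ (nonZeroDivisors R)
    (powers_le_nonZeroDivisors_of_noZeroDivisors hϖ.ne_zero) fun s hs => ?_).mpr inferInstance
  obtain ⟨n, hn⟩ := IsDiscreteValuationRing.associated_pow_irreducible
    (nonZeroDivisors.ne_zero hs) hϖ
  exact ⟨ϖ ^ n, ⟨n, rfl⟩, hn.dvd⟩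

theorem away_pi {ι : Type*} [Finite ι] {R S : ι → Type*} [∀ i, CommSemiring (R i)]
    [∀ i, CommSemiring (S i)] [∀ i, Algebra (R i) (S i)] (x : ∀ i, R i)
    [∀ i, IsLocalization.Away (x i) (S i)] : IsLocalization.Away x (∀ i, S i) := by
  rw [IsLocalization.Away, iff_map_piEvalRingHom]
  simp only [Submonoid.map_powers, Pi.evalRingHom_apply]
  infer_instance

theorem prod {R R' S S' : Type*} [CommSemiring R] [CommSemiring R'] [CommSemiring S]
    [CommSemiring S'] [Algebra R S] [Algebra R' S'] [Algebra (R × R') (S × S')]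
    (h : algebraMap (R × R') (S × S') = (algebraMap R S).prodMap (algebraMap R' S'))
    (M : Submonoid R) (N : Submonoid R') [IsLocalization M S] [IsLocalization N S'] :
    IsLocalization (M.prod N) (S × S') where
  map_units m := by
    rw [h]
    exact Prod.isUnit_iff.mpr ⟨map_units S ⟨_, m.2.1⟩, map_units S' ⟨_, m.2.2⟩⟩
  surj z := by
    obtain ⟨⟨a, m⟩, ha⟩ := surj M z.1
    obtain ⟨⟨b, n⟩, hb⟩ := surj N z.2
    exact ⟨((a, b), ⟨(m, n), m.2, n.2⟩), by rw [h]; exact Prod.ext ha hb⟩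
  exists_of_eq {x y} eq := by
    rw [h] at eq
    obtain ⟨m, hm⟩ := exists_of_eq (M := M) (congrArg Prod.fst eq)
    obtain ⟨n, hn⟩ := exists_of_eq (M := N) (congrArg Prod.snd eq)
    exact ⟨⟨(m, n), m.2, n.2⟩, Prod.ext hm hn⟩

theorem away_prod {R R' S S' : Type*} [CommSemiring R] [CommSemiring R'] [CommSemiring S]
    [CommSemiring S'] [Algebra R S] [Algebra R' S'] [Algebra (R × R') (S × S')]
    (h : algebraMap (R × R') (S × S') = (algebraMap R S).prodMap (algebraMap R' S'))
    (a : R) (b : R') [IsLocalization.Away a S] [IsLocalization.Away b S'] :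
    IsLocalization.Away (a, b) (S × S') := by
  have := prod h (.powers a) (.powers b)
  refine (iff_of_le_of_exists_dvd _ _ ?_ ?_).mpr this
  · rintro _ ⟨n, rfl⟩
    exact ⟨⟨n, rfl⟩, ⟨n, rfl⟩⟩
  · rintro ⟨_, _⟩ ⟨⟨m, rfl⟩, ⟨n, rfl⟩⟩
    exact ⟨(a, b) ^ max m n, ⟨_, rfl⟩,
      Prod.mk_dvd_mk.mpr ⟨pow_dvd_pow a (le_max_left m n), pow_dvd_pow b (le_max_right m n)⟩⟩

end IsLocalization

theorem closeMem_of_tail_eq {x y : ProdRing k O} {B : ℕ} (hx : closeMem k O π e ψ x)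
    (h1 : ∀ i, B ≤ i → x.1 i = y.1 i) (h2 : x.2 = y.2) : closeMem k O π e ψ y := by
  intro n hn
  obtain ⟨C, hC, hx⟩ := hx n hn
  refine ⟨max C B, hC.trans (le_max_left _ _), fun i hi => ?_⟩
  rw [← h1 i ((le_max_right _ _).trans hi), ← h2]
  exact hx i ((le_max_left _ _).trans hi)

theorem splitHom_injective (B : ℕ) : Function.Injective (splitHom k O π e ψ B) := by
  intro x y hxy
  have hlt : ∀ i : {i // i < B}, x.1.1 i = y.1.1 i := congrFun (congrArg Prod.fst hxy)
  have hge : toGe k O π e ψ B x = toGe k O π e ψ B y :=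
    congrArg Subtype.val (congrArg Prod.snd hxy)
  have hinf : x.1.2 = y.1.2 := congrArg (fun t : ProdRingGe k O B => t.2) hge
  refine Subtype.ext (Prod.ext (funext fun i => ?_) hinf)
  rcases lt_or_ge i B with h | h
  · exact hlt ⟨i, h⟩
  · exact congrFun (congrArg Prod.fst hge) ⟨i, h⟩

theorem splitHom_surjective (B : ℕ) : Function.Surjective (splitHom k O π e ψ B) := by
  rintro ⟨a, _, y, rfl⟩
  let x : ProdRing k O := (fun i => if h : i < B then a ⟨i, h⟩ else y.1.1 i, y.1.2)
  have hx : closeMem k O π e ψ x :=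
    closeMem_of_tail_eq k O π e ψ y.2
      (fun i hi => (dif_neg (not_lt.mpr hi) : x.1 i = _).symm) rfl
  exact ⟨⟨x, hx⟩, Prod.ext (funext fun i => dif_pos i.2)
    (Subtype.ext (Prod.ext (funext fun i => dif_neg (not_lt.mpr i.2)) rfl))⟩

theorem statement_2_general
    (k : Type) [Field k]
    (O : ℕ → Type) [∀ i, CommRing (O i)] [∀ i, IsDomain (O i)]
    [∀ i, IsDiscreteValuationRing (O i)]
    (π : ∀ i, O i) (hπ : ∀ i, Irreducible (π i))
    (e : ℕ → ℕ)
    (ψ : ∀ i, ((PowerSeries k) ⧸ (Ideal.span {(X : PowerSeries k) ^ e i})) ≃+*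
      ((O i) ⧸ (Ideal.span {π i ^ e i})))
    (hψ : ∀ i, ψ i (Ideal.Quotient.mk _ (X : PowerSeries k)) = Ideal.Quotient.mk _ (π i))
    (B : ℕ) :
    Function.Bijective (splitHom k O π e ψ B)
    ∧ ∃ g : Fring k O π e ψ hψ →+*
        ((i : {i : ℕ // i < B}) → FractionRing (O i.1)) × FgeB k O π e ψ hψ B,
        g.comp (algebraMap ↥(closeSubring k O π e ψ) (Fring k O π e ψ hψ))
          = splitHomF k O π e ψ hψ B
        ∧ Function.Bijective g := by
  have hbij : Function.Bijective (splitHom k O π e ψ B) :=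
    ⟨splitHom_injective k O π e ψ B, splitHom_surjective k O π e ψ B⟩
  let _ : Algebra (ProdLt O B × OgeB k O π e ψ B)
      (((i : {i : ℕ // i < B}) → FractionRing (O i.1)) × FgeB k O π e ψ hψ B) :=
    (RingHom.prodMap (algebraMap _ _) (algebraMap _ _)).toAlgebra
  have (i : {i : ℕ // i < B}) : IsLocalization.Away (π i.1) (FractionRing (O i.1)) :=
    IsLocalization.away_fractionRing_of_irreducible (hπ i)
  have : IsLocalization.Away (fun i : {i : ℕ // i < B} => π i.1)
      ((i : {i : ℕ // i < B}) → FractionRing (O i.1)) := IsLocalization.away_pi _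
  have : IsLocalization.Away (splitHom k O π e ψ B (piO k O π e ψ hψ))
      (((i : {i : ℕ // i < B}) → FractionRing (O i.1)) × FgeB k O π e ψ hψ B) :=
    IsLocalization.away_prod rfl (fun i : {i : ℕ // i < B} => π i.1) (piGe k O π e ψ hψ B)
  have hpow :
      (Submonoid.powers (piO k O π e ψ hψ)).map (RingEquiv.ofBijective _ hbij).toMonoidHom
        = .powers (splitHom k O π e ψ B (piO k O π e ψ hψ)) :=
    Submonoid.map_powers _ _
  let g := IsLocalization.ringEquivOfRingEquiv (Fring k O π e ψ hψ)
    (((i : {i : ℕ // i < B}) → FractionRing (O i.1)) × FgeB k O π e ψ hψ B) _ hpow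
  exact ⟨hbij, g, RingHom.ext (IsLocalization.ringEquivOfRingEquiv_eq hpow), g.bijective⟩

theorem statement_2
    (p : ℕ) (hp : p.Prime)
    (k : Type) [Field k] [CharP k p] [ExpChar k p] [PerfectRing k p]
    (O : ℕ → Type) [∀ i, CommRing (O i)] [∀ i, IsDomain (O i)]
    [∀ i, IsDiscreteValuationRing (O i)] [∀ i, CharZero (O i)]
    (π : ∀ i, O i) (hπ : ∀ i, Irreducible (π i))
    [∀ i, IsAdicComplete (Ideal.span {π i}) (O i)]
    (ρ : ∀ i, ((O i) ⧸ (Ideal.span {π i})) ≃+* k)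
    (e : ℕ → ℕ) (he : ∀ i, i ≤ e i)
    (hpe : ∀ i, Ideal.span {((p : O i))} = Ideal.span {π i ^ e i})
    (ψ : ∀ i, ((PowerSeries k) ⧸ (Ideal.span {(X : PowerSeries k) ^ e i})) ≃+*
      ((O i) ⧸ (Ideal.span {π i ^ e i})))
    (hψ : ∀ i, ψ i (Ideal.Quotient.mk _ (X : PowerSeries k)) = Ideal.Quotient.mk _ (π i))
    (B : ℕ) (hB : 1 ≤ B) :
    Function.Bijective (splitHom k O π e ψ B)
    ∧ ∃ g : Fring k O π e ψ hψ →+*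
        ((i : {i : ℕ // i < B}) → FractionRing (O i.1)) × FgeB k O π e ψ hψ B,
        g.comp (algebraMap ↥(closeSubring k O π e ψ) (Fring k O π e ψ hψ))
          = splitHomF k O π e ψ hψ B
        ∧ Function.Bijective g :=
  statement_2_general k O π hπ e ψ hψ B
end
end

section
/- For every j ∈ ℕ ∪ {∞}, the coordinate projection O → O_j is a surjective ring homomorphism; consequently the induced ring homomorphism F → F_j (obtained by inverting π, which maps to the uniformizer π_j) is also surjective. -/
open PowerSeries

set_option maxHeartbeats 1000000
set_option synthInstance.maxHeartbeats 400000

noncomputable section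

variable (k : Type) [Field k]
variable (O : ℕ → Type) [∀ i, CommRing (O i)]
variable (π : ∀ i, O i) (e : ℕ → ℕ)
variable (ψ : ∀ i, ((PowerSeries k) ⧸ (Ideal.span {(X : PowerSeries k) ^ e i})) ≃+*
    ((O i) ⧸ (Ideal.span {π i ^ e i})))
variable (hψ : ∀ i, ψ i (Ideal.Quotient.mk _ (X : PowerSeries k)) = Ideal.Quotient.mk _ (π i))

variable [∀ i, IsDomain (O i)] (hπ : ∀ i, Irreducible (π i))

/-- The induced map `F → F_j` for `j ∈ ℕ`, where `F_j = Frac(O_j)`. -/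
def locProj (j : ℕ) : Fring k O π e ψ hψ →+* FractionRing (O j) :=
  Localization.awayLift
    ((algebraMap (O j) (FractionRing (O j))).comp (projO k O π e ψ j))
    (piO k O π e ψ hψ)
    (IsLocalization.map_units (M := nonZeroDivisors (O j)) _
      ⟨π j, mem_nonZeroDivisors_of_ne_zero (hπ j).ne_zero⟩)

/-- The induced map `F → F_∞`, where `F_∞ = Frac(k[[π_∞]]) = k((π_∞))`. -/
def locProjInf : Fring k O π e ψ hψ →+* FractionRing (PowerSeries k) :=
  Localization.awayLift
    ((algebraMap (PowerSeries k) (FractionRing (PowerSeries k))).comp (projInf k O π e ψ))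
    (piO k O π e ψ hψ)
    (IsLocalization.map_units (M := nonZeroDivisors (PowerSeries k)) _
      ⟨(X : PowerSeries k), mem_nonZeroDivisors_of_ne_zero PowerSeries.X_ne_zero⟩)

/-!
A point of `O` is constrained only in its tail, and only through its `∞`-coordinate. Hence
`y ∈ O_j` lifts to the point with `y` at `j` and zeros elsewhere, and `f ∈ O_∞` lifts to `f` paired
with arbitrary lifts of the classes `ψ_i (f mod π_∞^{e_i})`, which satisfy the congruences exactly.
For the fraction fields: in a discrete valuation ring every denominator is a unit times a power of
the uniformizer, so `F_j = O_j[1/π_j]` and surjectivity passes to the localizations.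
-/

theorem IsDiscreteValuationRing.exists_mul_pow_eq_algebraMap {A K : Type*} [CommRing A]
    [IsDomain A] [IsDiscreteValuationRing A] [Field K] [Algebra A K] [IsFractionRing A K]
    {ϖ : A} (hϖ : Irreducible ϖ) (z : K) :
    ∃ (a : A) (m : ℕ), z * algebraMap A K ϖ ^ m = algebraMap A K a := by
  obtain ⟨a, b, hb, rfl⟩ := IsFractionRing.div_surjective A z
  obtain ⟨m, u, rfl⟩ :=
    IsDiscreteValuationRing.eq_unit_mul_pow_irreducible (nonZeroDivisors.ne_zero hb) hϖ
  refine ⟨a * ↑u⁻¹, m, ?_⟩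
  have hu : algebraMap A K ↑u * algebraMap A K ↑u⁻¹ = 1 := by
    rw [← map_mul, Units.mul_inv, map_one]
  have hϖm : algebraMap A K ϖ ^ m ≠ 0 :=
    pow_ne_zero m (IsFractionRing.to_map_ne_zero_of_mem_nonZeroDivisors
      (mem_nonZeroDivisors_of_ne_zero hϖ.ne_zero))
  rw [map_mul, map_mul, map_pow]
  field_simp
  rw [mul_assoc, hu, mul_one]

theorem awayLift_algebraMap_comp_surjective {R A K : Type*} [CommRing R] [CommRing A]
    [IsDomain A] [IsDiscreteValuationRing A] [Field K] [Algebra A K] [IsFractionRing A K]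
    {f : R →+* A} (hf : Function.Surjective f) {r : R} (hr : Irreducible (f r))
    (hu : IsUnit ((algebraMap A K).comp f r)) :
    Function.Surjective (Localization.awayLift ((algebraMap A K).comp f) r hu) := by
  refine (IsLocalization.lift_surjective_iff _).2 fun z => ?_
  obtain ⟨a, m, h⟩ := IsDiscreteValuationRing.exists_mul_pow_eq_algebraMap hr z
  obtain ⟨x, rfl⟩ := hf a
  exact ⟨(x, ⟨r ^ m, m, rfl⟩), by simpa using h⟩

omit [∀ i, IsDomain (O i)] in
theorem projO_surjective (j : ℕ) : Function.Surjective (projO k O π e ψ j) := by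
  intro y
  refine ⟨⟨(Function.update (fun i => (0 : O i)) j y, 0), fun n _ => ?_⟩, by simp [projO]⟩
  refine ⟨max n (j + 1), le_max_left _ _, fun i hi => ⟨0, by simp, ?_⟩⟩
  dsimp only
  rw [Function.update_of_ne (by omega), sub_zero]
  exact Ideal.zero_mem _

omit [∀ i, IsDomain (O i)] in
theorem projInf_surjective : Function.Surjective (projInf k O π e ψ) := by
  intro f
  choose y hy using fun i => Ideal.Quotient.mk_surjective (ψ i (Ideal.Quotient.mk _ f))
  refine ⟨⟨(y, f), fun n _ => ⟨n, le_rfl, fun i _ => ⟨y i, hy i, ?_⟩⟩⟩, rfl⟩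
  rw [sub_self]
  exact Ideal.zero_mem _

theorem locProj_surjective [∀ i, IsDiscreteValuationRing (O i)] (j : ℕ) :
    Function.Surjective (locProj k O π e ψ hψ hπ j) := by
  unfold locProj
  exact awayLift_algebraMap_comp_surjective (projO_surjective k O π e ψ j) (hπ j) _

omit [∀ i, IsDomain (O i)] in
theorem locProjInf_surjective : Function.Surjective (locProjInf k O π e ψ hψ) := by
  unfold locProjInf
  exact awayLift_algebraMap_comp_surjective (projInf_surjective k O π e ψ)
    PowerSeries.X_irreducible _

theorem statement_4_general
    (k : Type) [Field k]
    (O : ℕ → Type) [∀ i, CommRing (O i)] [∀ i, IsDomain (O i)]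
    [∀ i, IsDiscreteValuationRing (O i)]
    (π : ∀ i, O i) (hπ : ∀ i, Irreducible (π i))
    (e : ℕ → ℕ)
    (ψ : ∀ i, ((PowerSeries k) ⧸ (Ideal.span {(X : PowerSeries k) ^ e i})) ≃+*
      ((O i) ⧸ (Ideal.span {π i ^ e i})))
    (hψ : ∀ i, ψ i (Ideal.Quotient.mk _ (X : PowerSeries k)) = Ideal.Quotient.mk _ (π i)) :
    (∀ j : ℕ, Function.Surjective (projO k O π e ψ j))
    ∧ Function.Surjective (projInf k O π e ψ)
    ∧ (∀ j : ℕ, Function.Surjective (locProj k O π e ψ hψ hπ j))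
    ∧ Function.Surjective (locProjInf k O π e ψ hψ) :=
  ⟨projO_surjective k O π e ψ, projInf_surjective k O π e ψ,
    locProj_surjective k O π e ψ hψ hπ, locProjInf_surjective k O π e ψ hψ⟩

theorem statement_4
    (p : ℕ) (hp : p.Prime)
    (k : Type) [Field k] [CharP k p] [ExpChar k p] [PerfectRing k p]
    (O : ℕ → Type) [∀ i, CommRing (O i)] [∀ i, IsDomain (O i)]
    [∀ i, IsDiscreteValuationRing (O i)] [∀ i, CharZero (O i)]
    (π : ∀ i, O i) (hπ : ∀ i, Irreducible (π i))
    [∀ i, IsAdicComplete (Ideal.span {π i}) (O i)]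
    (ρ : ∀ i, ((O i) ⧸ (Ideal.span {π i})) ≃+* k)
    (e : ℕ → ℕ) (he : ∀ i, i ≤ e i)
    (hpe : ∀ i, Ideal.span {((p : O i))} = Ideal.span {π i ^ e i})
    (ψ : ∀ i, ((PowerSeries k) ⧸ (Ideal.span {(X : PowerSeries k) ^ e i})) ≃+*
      ((O i) ⧸ (Ideal.span {π i ^ e i})))
    (hψ : ∀ i, ψ i (Ideal.Quotient.mk _ (X : PowerSeries k)) = Ideal.Quotient.mk _ (π i)) :
    (∀ j : ℕ, Function.Surjective (projO k O π e ψ j))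
    ∧ Function.Surjective (projInf k O π e ψ)
    ∧ (∀ j : ℕ, Function.Surjective (locProj k O π e ψ hψ hπ j))
    ∧ Function.Surjective (locProjInf k O π e ψ hψ) :=
  statement_4_general k O π hπ e ψ hψ
end
end
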